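/- Let x ∈ Δ_d↓ and ε > 0, and let B be any nonempty subset of the ball B^∞_ε(x) = {x' ∈ Δ_d↓ : ‖x' − x‖_∞ ≤ ε}. Then the majorization supremum x^sup of B (defined via the upper envelope of the pointwise suprema of partial sums) satisfies ‖x^sup − x‖_∞ ≤ ε; i.e., the supremum of any subset of the ℓ^∞-ball remains in the ball. -/

import Mathlib

open Finset

/-- Partial sum of the first `k` components of `x`. -/
def psum (d : ℕ) (x : Fin d → ℝ) (k : ℕ) : ℝ :=
  ∑ i ∈ Finset.univ.filter (fun i : Fin d => (i : ℕ) < k), x i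

/-- The ordered probability simplex `Δ_d↓`. -/
def Simplex (d : ℕ) (x : Fin d → ℝ) : Prop :=
  (∀ i j : Fin d, i ≤ j → x j ≤ x i) ∧ (∀ i, 0 ≤ x i) ∧ ∑ i, x i = 1

/-- Majorization: all partial sums of `x` dominate those of `y`. -/
def Maj (d : ℕ) (x y : Fin d → ℝ) : Prop :=
  ∀ k : ℕ, psum d y k ≤ psum d x k

/-- ℓ∞ distance. -/
noncomputable def dInf (d : ℕ) (x y : Fin d → ℝ) : ℝ := ⨆ i, |x i - y i|

/-- ℓ¹ distance. -/
def dOne (d : ℕ) (x y : Fin d → ℝ) : ℝ := ∑ i, |x i - y i|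

/-
Write `F k = sup_{b ∈ B} s_k(b)` and `L` for its least concave majorant on `{0, …, d}`, so that
`x^sup_k = L (k + 1) - L k`. Every `b ∈ B` is non-increasing with `|b_k - x_k| ≤ ε`, hence
`s_m(b) ≤ s_k(b) + (m - k)(x_k + ε)` for `m ≥ k`, and so `F m ≤ L k + (m - k)(x_k + ε)`.
If the slope of `L` on `[k, k + 1]` exceeded `x_k + ε`, the minimum of `L` with this line to the
right of `k` would be a smaller concave majorant of `F`. The lower bound is symmetric, and the same
argument with slope `0` shows that `x^sup` is nonnegative.
-/

section ConcaveEnvelope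

variable {d : ℕ} {F : ℕ → ℝ}

def IsConcaveMajorant (d : ℕ) (F g : ℕ → ℝ) : Prop :=
  (∀ k ≤ d, F k ≤ g k) ∧ ∀ m, m + 2 ≤ d → g m + g (m + 2) ≤ 2 * g (m + 1)

noncomputable def concaveEnvelope (d : ℕ) (F : ℕ → ℝ) (k : ℕ) : ℝ :=
  ⨅ g : {g // IsConcaveMajorant d F g}, g.1 k

lemma min_add_min_le_two_mul_min {a₀ a₁ a₂ b₀ b₁ b₂ : ℝ} (ha : a₀ + a₂ ≤ 2 * a₁)
    (hb : b₀ + b₂ ≤ 2 * b₁) : min a₀ b₀ + min a₂ b₂ ≤ 2 * min a₁ b₁ := by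
  rcases min_cases a₁ b₁ with ⟨h, -⟩ | ⟨h, -⟩ <;> rw [h] <;>
    linarith [min_le_left a₀ b₀, min_le_right a₀ b₀, min_le_left a₂ b₂, min_le_right a₂ b₂]

lemma IsConcaveMajorant.succ_sub_le_succ_sub {g : ℕ → ℝ} (hg : IsConcaveMajorant d F g)
    {i j : ℕ} (hij : i ≤ j) (hj : j + 1 ≤ d) : g (j + 1) - g j ≤ g (i + 1) - g i := by
  induction j, hij using Nat.le_induction with
  | base => exact le_rfl
  | succ j hij ih => linarith [ih (by omega), hg.2 j (by omega)]

lemma concaveEnvelope_le {g : ℕ → ℝ} (hg : IsConcaveMajorant d F g) {k : ℕ} (hk : k ≤ d) :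
    concaveEnvelope d F k ≤ g k :=
  ciInf_le ⟨F k, by rintro _ ⟨g', rfl⟩; exact g'.2.1 k hk⟩
    (⟨g, hg⟩ : {g // IsConcaveMajorant d F g})

lemma le_concaveEnvelope (hne : ∃ g, IsConcaveMajorant d F g) {k : ℕ} {r : ℝ}
    (h : ∀ g, IsConcaveMajorant d F g → r ≤ g k) : r ≤ concaveEnvelope d F k :=
  have : Nonempty {g // IsConcaveMajorant d F g} := let ⟨g, hg⟩ := hne; ⟨⟨g, hg⟩⟩
  le_ciInf fun g => h g.1 g.2

lemma isConcaveMajorant_concaveEnvelope (hne : ∃ g, IsConcaveMajorant d F g) :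
    IsConcaveMajorant d F (concaveEnvelope d F) := by
  refine ⟨fun k hk => le_concaveEnvelope hne fun g hg => hg.1 k hk, fun m hm => ?_⟩
  have key : (concaveEnvelope d F m + concaveEnvelope d F (m + 2)) / 2
      ≤ concaveEnvelope d F (m + 1) :=
    le_concaveEnvelope hne fun g hg => by
      linarith [concaveEnvelope_le hg (k := m) (by omega), concaveEnvelope_le hg hm, hg.2 m hm]
  linarith

lemma concaveEnvelope_succ_sub_le (hne : ∃ g, IsConcaveMajorant d F g) {k : ℕ} (hk : k + 1 ≤ d)
    {c : ℝ} (hF : ∀ m, k ≤ m → m ≤ d → F m ≤ concaveEnvelope d F k + ((m : ℝ) - k) * c) :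
    concaveEnvelope d F (k + 1) - concaveEnvelope d F k ≤ c := by
  set L := concaveEnvelope d F
  have hL := isConcaveMajorant_concaveEnvelope hne
  set g : ℕ → ℝ := fun m => if k ≤ m then min (L m) (L k + ((m : ℝ) - k) * c) else L m
  have hgL : ∀ m, g m ≤ L m := fun m => by
    simp only [g]; split_ifs
    exacts [min_le_left _ _, le_rfl]
  have hg : IsConcaveMajorant d F g := by
    refine ⟨fun m hm => ?_, fun m hm => ?_⟩
    · simp only [g]; split_ifs with h
      exacts [le_min (hL.1 m hm) (hF m h hm), hL.1 m hm]
    by_cases h : k ≤ m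
    · simp only [g, if_pos h, if_pos (h.trans m.le_succ), if_pos (by omega : k ≤ m + 2)]
      refine min_add_min_le_two_mul_min (hL.2 m hm) (le_of_eq ?_)
      push_cast; ring
    · have hmid : g (m + 1) = L (m + 1) := by
        simp only [g]; split_ifs with h'
        · obtain rfl : k = m + 1 := by omega
          simp
        · rfl
      linarith [hgL m, hgL (m + 2), hL.2 m hm]
  have := concaveEnvelope_le hg hk
  simp only [g, if_pos k.le_succ] at this
  push_cast at this
  linarith [min_le_right (L (k + 1)) (L k + ((k : ℝ) + 1 - k) * c)]

lemma le_concaveEnvelope_succ_sub (hne : ∃ g, IsConcaveMajorant d F g) {k : ℕ} (hk : k + 1 ≤ d)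
    {c : ℝ} (hF : ∀ m ≤ k + 1, F m ≤ concaveEnvelope d F (k + 1) - ((k : ℝ) + 1 - m) * c) :
    c ≤ concaveEnvelope d F (k + 1) - concaveEnvelope d F k := by
  set L := concaveEnvelope d F
  have hL := isConcaveMajorant_concaveEnvelope hne
  set g : ℕ → ℝ := fun m =>
    if m ≤ k + 1 then min (L m) (L (k + 1) - ((k : ℝ) + 1 - m) * c) else L m
  have hgL : ∀ m, g m ≤ L m := fun m => by
    simp only [g]; split_ifs
    exacts [min_le_left _ _, le_rfl]
  have hg : IsConcaveMajorant d F g := by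
    refine ⟨fun m hm => ?_, fun m hm => ?_⟩
    · simp only [g]; split_ifs with h
      exacts [le_min (hL.1 m hm) (hF m h), hL.1 m hm]
    by_cases h : m + 2 ≤ k + 1
    · simp only [g, if_pos h, if_pos (by omega : m ≤ k + 1), if_pos (by omega : m + 1 ≤ k + 1)]
      refine min_add_min_le_two_mul_min (hL.2 m hm) (le_of_eq ?_)
      push_cast; ring
    · have hmid : g (m + 1) = L (m + 1) := by
        simp only [g]; split_ifs with h'
        · obtain rfl : m = k := by omega
          simp
        · rfl
      linarith [hgL m, hgL (m + 2), hL.2 m hm]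
  have := concaveEnvelope_le hg (k := k) (by omega)
  simp only [g, if_pos k.le_succ] at this
  linarith [min_le_right (L k) (L (k + 1) - ((k : ℝ) + 1 - k) * c)]

end ConcaveEnvelope

section Psum

variable {d : ℕ} (y : Fin d → ℝ)

lemma psum_zero : psum d y 0 = 0 := by
  simp [psum]

lemma psum_succ {k : ℕ} (hk : k < d) : psum d y (k + 1) = psum d y k + y ⟨k, hk⟩ := by
  have : univ.filter (fun i : Fin d => (i : ℕ) < k + 1)
      = insert ⟨k, hk⟩ (univ.filter fun i : Fin d => (i : ℕ) < k) := by
    ext i; simp [Fin.ext_iff, le_iff_eq_or_lt]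
  rw [psum, this, sum_insert (by simp), add_comm, psum]

lemma psum_of_le {k : ℕ} (hk : d ≤ k) : psum d y k = ∑ i, y i := by
  rw [psum, filter_true_of_mem fun i _ => i.2.trans_le hk]

lemma psum_neg (k : ℕ) : psum d (-y) k = -psum d y k := by
  simp [psum]

lemma psum_sub_psum_le {m n : ℕ} {a : ℝ} (hmn : m ≤ n) (hn : n ≤ d)
    (h : ∀ i : Fin d, m ≤ (i : ℕ) → (i : ℕ) < n → y i ≤ a) :
    psum d y n - psum d y m ≤ ((n : ℝ) - m) * a := by
  induction n, hmn using Nat.le_induction with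
  | base => simp
  | succ n hmn ih =>
    rw [psum_succ y (by omega)]
    push_cast
    linarith [ih (by omega) fun i hi hin => h i hi (by omega), h ⟨n, by omega⟩ hmn (by simp)]

lemma le_psum_sub_psum {m n : ℕ} {a : ℝ} (hmn : m ≤ n) (hn : n ≤ d)
    (h : ∀ i : Fin d, m ≤ (i : ℕ) → (i : ℕ) < n → a ≤ y i) :
    ((n : ℝ) - m) * a ≤ psum d y n - psum d y m := by
  have := psum_sub_psum_le (-y) (a := -a) hmn hn fun i hi hin => neg_le_neg (h i hi hin)
  rw [psum_neg, psum_neg] at this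
  linarith

lemma psum_sub_succ {k : ℕ} (L : ℕ → ℝ) (hk : k ≤ d) :
    psum d (fun i => L (i + 1) - L i) k = L k - L 0 := by
  induction k with
  | zero => simp [psum_zero]
  | succ k ih => rw [psum_succ _ hk, ih (by omega)]; ring

lemma psum_add_psum_le_of_antitone (hy : ∀ i j : Fin d, i ≤ j → y j ≤ y i) {m : ℕ}
    (hm : m + 2 ≤ d) : psum d y m + psum d y (m + 2) ≤ 2 * psum d y (m + 1) := by
  rw [psum_succ y (k := m + 1) (by omega), psum_succ y (k := m) (by omega)]
  linarith [hy ⟨m, by omega⟩ ⟨m + 1, by omega⟩ (by simp [Fin.le_def])]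

lemma maj_of_forall_le {x : Fin d → ℝ} (h : ∀ k ≤ d, psum d y k ≤ psum d x k) : Maj d x y := by
  intro k
  rcases le_total k d with hk | hk
  · exact h k hk
  · simpa only [psum_of_le _ hk, psum_of_le _ le_rfl] using h d le_rfl

end Psum

section MajorizationSup

variable {d : ℕ} {B : Set (Fin d → ℝ)}

lemma Simplex.le_one {b : Fin d → ℝ} (hb : Simplex d b) (i : Fin d) : b i ≤ 1 :=
  (single_le_sum (fun j _ => hb.2.1 j) (mem_univ i)).trans_eq hb.2.2

lemma Simplex.psum_le_one {b : Fin d → ℝ} (hb : Simplex d b) (k : ℕ) : psum d b k ≤ 1 :=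
  (sum_le_sum_of_subset_of_nonneg (filter_subset _ _) fun i _ _ => hb.2.1 i).trans_eq hb.2.2

/-- `psumSup d B`, `concaveEnvelope d (psumSup d B)` and `majSup d B` are the paper's `s̄`, `L̄`
and `x^sup`, with `0`-based indices: a discretely concave majorant on `{0, …, d}` extends piecewise
linearly to a concave one, so `concaveEnvelope` is `L̄` at the integers. -/
noncomputable def psumSup (d : ℕ) (B : Set (Fin d → ℝ)) (k : ℕ) : ℝ :=
  ⨆ b : B, psum d b k

noncomputable def majSup (d : ℕ) (B : Set (Fin d → ℝ)) (i : Fin d) : ℝ :=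
  concaveEnvelope d (psumSup d B) (i + 1) - concaveEnvelope d (psumSup d B) i

lemma psum_le_psumSup (hB : ∀ b ∈ B, Simplex d b) {b : Fin d → ℝ} (hb : b ∈ B) (k : ℕ) :
    psum d b k ≤ psumSup d B k :=
  le_ciSup (f := fun b : B => psum d b k)
    ⟨1, by rintro _ ⟨b', rfl⟩; exact (hB b' b'.2).psum_le_one k⟩ ⟨b, hb⟩

lemma psumSup_le (hBne : B.Nonempty) {k : ℕ} {r : ℝ} (h : ∀ b ∈ B, psum d b k ≤ r) :
    psumSup d B k ≤ r :=
  have := hBne.to_subtype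
  ciSup_le fun b => h b b.2

lemma isConcaveMajorant_psumSup_natCast (hBne : B.Nonempty) (hB : ∀ b ∈ B, Simplex d b) :
    IsConcaveMajorant d (psumSup d B) (fun k => k) := by
  refine ⟨fun k hk => psumSup_le hBne fun b hb => ?_, fun m _ => by push_cast; linarith⟩
  have := psum_sub_psum_le b (Nat.zero_le k) hk fun i _ _ => (hB b hb).le_one i
  rw [psum_zero] at this
  linarith

lemma isConcaveMajorant_psumSup_one (hBne : B.Nonempty) (hB : ∀ b ∈ B, Simplex d b) :
    IsConcaveMajorant d (psumSup d B) (fun _ => 1) :=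
  ⟨fun k _ => psumSup_le hBne fun b hb => (hB b hb).psum_le_one k, fun _ _ => by norm_num⟩

variable (hBne : B.Nonempty) (hB : ∀ b ∈ B, Simplex d b)
include hBne hB

lemma isConcaveMajorant_concaveEnvelope_psumSup :
    IsConcaveMajorant d (psumSup d B) (concaveEnvelope d (psumSup d B)) :=
  isConcaveMajorant_concaveEnvelope ⟨_, isConcaveMajorant_psumSup_natCast hBne hB⟩

lemma concaveEnvelope_psumSup_zero : concaveEnvelope d (psumSup d B) 0 = 0 := by
  obtain ⟨b, hb⟩ := hBne
  refine le_antisymm ?_ ?_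
  · simpa using concaveEnvelope_le (isConcaveMajorant_psumSup_natCast ⟨b, hb⟩ hB) (Nat.zero_le d)
  · simpa [psum_zero] using (psum_le_psumSup hB hb 0).trans
      ((isConcaveMajorant_concaveEnvelope_psumSup ⟨b, hb⟩ hB).1 0 (Nat.zero_le d))

lemma concaveEnvelope_psumSup_self : concaveEnvelope d (psumSup d B) d = 1 := by
  obtain ⟨b, hb⟩ := hBne
  refine le_antisymm (concaveEnvelope_le (isConcaveMajorant_psumSup_one ⟨b, hb⟩ hB) le_rfl) ?_
  simpa [psum_of_le b le_rfl, (hB b hb).2.2] using (psum_le_psumSup hB hb d).trans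
      ((isConcaveMajorant_concaveEnvelope_psumSup ⟨b, hb⟩ hB).1 d le_rfl)

lemma psum_majSup {k : ℕ} (hk : k ≤ d) :
    psum d (majSup d B) k = concaveEnvelope d (psumSup d B) k := by
  refine (psum_sub_succ _ hk).trans ?_
  rw [concaveEnvelope_psumSup_zero hBne hB, sub_zero]

lemma majSup_le (k : Fin d) {c : ℝ} (hc : ∀ b ∈ B, b k ≤ c) : majSup d B k ≤ c := by
  have hL := isConcaveMajorant_concaveEnvelope_psumSup hBne hB
  refine concaveEnvelope_succ_sub_le ⟨_, hL⟩ k.2 fun m hkm hm => psumSup_le hBne fun b hb => ?_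
  have := psum_sub_psum_le b hkm hm (a := c) fun i hi _ => ((hB b hb).1 k i hi).trans (hc b hb)
  linarith [psum_le_psumSup hB hb k, hL.1 k k.2.le]

lemma le_majSup (k : Fin d) {c : ℝ} (hc : ∀ b ∈ B, c ≤ b k) : c ≤ majSup d B k := by
  have hL := isConcaveMajorant_concaveEnvelope_psumSup hBne hB
  refine le_concaveEnvelope_succ_sub ⟨_, hL⟩ k.2 fun m hm => psumSup_le hBne fun b hb => ?_
  have := le_psum_sub_psum b hm k.2 (a := c) fun i _ hi =>
    (hc b hb).trans ((hB b hb).1 i k (Nat.lt_succ_iff.1 hi))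
  push_cast at this
  linarith [psum_le_psumSup hB hb (k + 1), hL.1 (k + 1) k.2]

lemma simplex_majSup : Simplex d (majSup d B) := by
  refine ⟨fun i j hij => ?_, fun i => le_majSup hBne hB i fun b hb => (hB b hb).2.1 i, ?_⟩
  · exact (isConcaveMajorant_concaveEnvelope_psumSup hBne hB).succ_sub_le_succ_sub hij j.2
  · rw [← psum_of_le _ le_rfl, psum_majSup hBne hB le_rfl, concaveEnvelope_psumSup_self hBne hB]

lemma maj_majSup {b : Fin d → ℝ} (hb : b ∈ B) : Maj d (majSup d B) b :=
  maj_of_forall_le b fun k hk => by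
    rw [psum_majSup hBne hB hk]
    exact (psum_le_psumSup hB hb k).trans
      ((isConcaveMajorant_concaveEnvelope_psumSup hBne hB).1 k hk)

lemma maj_majSup_of_forall_maj {w : Fin d → ℝ} (hw : Simplex d w) (hwB : ∀ b ∈ B, Maj d w b) :
    Maj d w (majSup d B) :=
  maj_of_forall_le _ fun k hk => by
    rw [psum_majSup hBne hB hk]
    exact concaveEnvelope_le ⟨fun k _ => psumSup_le hBne fun b hb => hwB b hb k,
      fun m hm => psum_add_psum_le_of_antitone w hw.1 hm⟩ hk

end MajorizationSup

theorem sup_of_subset_in_linf_ball (d : ℕ) (hd : 0 < d) (x : Fin d → ℝ)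
    (ε : ℝ)
    (B : Set (Fin d → ℝ)) (hBne : B.Nonempty)
    (hB : ∀ b ∈ B, Simplex d b ∧ dInf d b x ≤ ε) :
    ∃ xsup : Fin d → ℝ, Simplex d xsup ∧
      (∀ b ∈ B, Maj d xsup b) ∧
      (∀ w : Fin d → ℝ, Simplex d w → (∀ b ∈ B, Maj d w b) → Maj d w xsup) ∧
      dInf d xsup x ≤ ε := by
  have hBs : ∀ b ∈ B, Simplex d b := fun b hb => (hB b hb).1
  have hclose : ∀ b ∈ B, ∀ i, |b i - x i| ≤ ε := fun b hb i =>
    (le_ciSup (Set.finite_range _).bddAbove i).trans (hB b hb).2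
  refine ⟨majSup d B, simplex_majSup hBne hBs, fun b hb => maj_majSup hBne hBs hb,
    fun w hw hwB => maj_majSup_of_forall_maj hBne hBs hw hwB, ?_⟩
  have : Nonempty (Fin d) := ⟨⟨0, hd⟩⟩
  refine ciSup_le fun i => abs_sub_le_iff.2 ⟨?_, ?_⟩
  · have := majSup_le hBne hBs i (c := x i + ε) fun b hb => by
      linarith [(abs_sub_le_iff.1 (hclose b hb i)).1]
    linarith
  · have := le_majSup hBne hBs i (c := x i - ε) fun b hb => by
      linarith [(abs_sub_le_iff.1 (hclose b hb i)).2]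
    linarith
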